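/- arXiv:2011.10245 — 2 statements merged into one kernel-verified Lean document; each statement's English description precedes it below -/
import Mathlib

section
/- Let a ≥ 0, b > 0, c > 0. The function g(x) = ln(a + b*x^(-c)) is convex on (0, ∞). -/
theorem stmt_5 (a b c : ℝ) (ha : 0 ≤ a) (hb : 0 < b) (hc : 0 < c) :
    ConvexOn ℝ (Set.Ioi 0) (fun x : ℝ => Real.log (a + b * x ^ (-c))) := by
  set g : ℝ → ℝ := fun x => Real.log (a + b * x ^ (-c)) with hg
  have hu : ∀ x : ℝ, 0 < x → 0 < a + b * x ^ (-c) := fun x hx =>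
    add_pos_of_nonneg_of_pos ha (mul_pos hb (Real.rpow_pos_of_pos hx _))
  -- derivative of g
  have hderiv : ∀ x : ℝ, 0 < x →
      HasDerivAt g (b * (-c * x ^ (-c - 1)) / (a + b * x ^ (-c))) x := by
    intro x hx
    have h1 : HasDerivAt (fun x : ℝ => x ^ (-c)) (-c * x ^ (-c - 1)) x :=
      Real.hasDerivAt_rpow_const (Or.inl hx.ne')
    have h2 : HasDerivAt (fun x : ℝ => a + b * x ^ (-c)) (b * (-c * x ^ (-c - 1))) x :=
      ((h1.const_mul b).const_add a)
    exact h2.log (hu x hx).ne'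
  have hdg : ∀ x : ℝ, 0 < x →
      deriv g x = b * (-c * x ^ (-c - 1)) / (a + b * x ^ (-c)) := fun x hx =>
    (hderiv x hx).deriv
  -- rewrite derivative
  have hform : ∀ x : ℝ, 0 < x →
      b * (-c * x ^ (-c - 1)) / (a + b * x ^ (-c)) = -(b * c) / (a * x ^ (c + 1) + b * x) := by
    intro x hx
    have hx1 : x ^ (-c - 1) = (x ^ (c + 1))⁻¹ := by
      rw [show -c - 1 = -(c + 1) by ring, Real.rpow_neg hx.le]
    have hx2 : x ^ (-c) * x ^ (c + 1) = x := by
      rw [← Real.rpow_add hx, show -c + (c + 1) = 1 by ring, Real.rpow_one]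
    have hp1 : (0 : ℝ) < x ^ (c + 1) := Real.rpow_pos_of_pos hx _
    have hp2 : (0 : ℝ) < a + b * x ^ (-c) := hu x hx
    have hd : (0:ℝ) < a * x ^ (c + 1) + b * x :=
      add_pos_of_nonneg_of_pos (mul_nonneg ha hp1.le) (mul_pos hb hx)
    have key : (a + b * x ^ (-c)) * x ^ (c + 1) = a * x ^ (c + 1) + b * x := by
      rw [add_mul, mul_assoc, hx2]
    rw [hx1, div_eq_div_iff hp2.ne' hd.ne', ← key]
    field_simp
  have hmono : MonotoneOn (deriv g) (Set.Ioi (0:ℝ)) := by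
    intro x hx y hy hxy
    rw [Set.mem_Ioi] at hx hy
    rw [hdg x hx, hdg y hy, hform x hx, hform y hy]
    have hdx : (0:ℝ) < a * x ^ (c + 1) + b * x :=
      add_pos_of_nonneg_of_pos (mul_nonneg ha (Real.rpow_pos_of_pos hx _).le) (mul_pos hb hx)
    have hdy : (0:ℝ) < a * y ^ (c + 1) + b * y :=
      add_pos_of_nonneg_of_pos (mul_nonneg ha (Real.rpow_pos_of_pos hy _).le) (mul_pos hb hy)
    have hle : a * x ^ (c + 1) + b * x ≤ a * y ^ (c + 1) + b * y := by
      have := Real.rpow_le_rpow hx.le hxy (by positivity : (0:ℝ) ≤ c + 1)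
      gcongr
    rw [neg_div, neg_div, neg_le_neg_iff]
    exact div_le_div_of_nonneg_left (by positivity) hdx hle
  have hcont : ContinuousOn g (Set.Ioi 0) := fun x hx =>
    ((hderiv x hx).continuousAt).continuousWithinAt
  have hdiff : DifferentiableOn ℝ g (interior (Set.Ioi (0:ℝ))) := by
    rw [interior_Ioi]
    exact fun x hx => ((hderiv x hx).differentiableAt).differentiableWithinAt
  exact MonotoneOn.convexOn_of_deriv (convex_Ioi 0) hcont hdiff (by rwa [interior_Ioi])
end

section
/- Let a ≥ 0, b > 0, c > 0. For all x, x₀ > 0, ln(a + b*x^(-c)) ≥ ln(a + b*x₀^(-c)) - (b*c)/(x₀*(a*x₀^c + b)) * (x - x₀). -/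
theorem stmt_6 (a b c : ℝ) (ha : 0 ≤ a) (hb : 0 < b) (hc : 0 < c)
    (x x₀ : ℝ) (hx : 0 < x) (hx₀ : 0 < x₀) :
    Real.log (a + b * x ^ (-c)) ≥
      Real.log (a + b * x₀ ^ (-c)) - (b * c) / (x₀ * (a * x₀ ^ c + b)) * (x - x₀) := by
  set K : ℝ := (b * c) / (x₀ * (a * x₀ ^ c + b)) with hK
  set F : ℝ → ℝ := fun y => Real.log (a + b * y ^ (-c)) + K * (y - x₀) with hFdef
  have hpos : ∀ y : ℝ, 0 < y → 0 < a + b * y ^ (-c) := fun y hy =>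
    add_pos_of_nonneg_of_pos ha (mul_pos hb (Real.rpow_pos_of_pos hy _))
  have hden : ∀ y : ℝ, 0 < y → 0 < y * (a * y ^ c + b) := fun y hy =>
    mul_pos hy (add_pos_of_nonneg_of_pos
      (mul_nonneg ha (Real.rpow_pos_of_pos hy c).le) hb)
  set d : ℝ → ℝ := fun y => K - b * c / (y * (a * y ^ c + b)) with hd
  have hF : ∀ y : ℝ, 0 < y → HasDerivAt F (d y) y := by
    intro y hy
    have h1 : HasDerivAt (fun z : ℝ => a + b * z ^ (-c))
        (b * (-c * y ^ (-c - 1))) y :=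
      ((Real.hasDerivAt_rpow_const (Or.inl hy.ne')).const_mul b).const_add a
    have h2 := h1.log (hpos y hy).ne'
    have h3 : HasDerivAt (fun z : ℝ => K * (z - x₀)) K y := by
      simpa using ((hasDerivAt_id y).sub_const x₀).const_mul K
    have h4 := h2.add h3
    have heq : b * (-c * y ^ (-c - 1)) / (a + b * y ^ (-c)) + K = d y := by
      have e1 : y ^ (c + 1) = y ^ c * y := by
        rw [Real.rpow_add hy, Real.rpow_one]
      have e2 : y ^ (-c) * y ^ (c + 1) = y := by
        rw [← Real.rpow_add hy, show -c + (c + 1) = 1 by ring, Real.rpow_one]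
      have e3 : y ^ (-c - 1) = (y ^ (c + 1))⁻¹ := by
        rw [show -c - 1 = -(c + 1) by ring, Real.rpow_neg hy.le]
      have hcp : (0:ℝ) < y ^ (c + 1) := Real.rpow_pos_of_pos hy _
      have e4 : y ^ (c + 1) * (a + b * y ^ (-c)) = y * (a * y ^ c + b) := by
        linear_combination a * e1 + b * e2
      have h5 : b * (-c * (y ^ (c + 1))⁻¹) / (a + b * y ^ (-c)) =
          -(b * c / (y ^ (c + 1) * (a + b * y ^ (-c)))) := by
        have hne1 : a + b * y ^ (-c) ≠ 0 := (hpos y hy).ne'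
        have hne2 : y ^ (c + 1) ≠ 0 := hcp.ne'
        field_simp
      rw [hd, e3, h5, e4]
      ring
    rw [← heq]
    exact h4
  have hmono : ∀ y : ℝ, x₀ ≤ y → 0 ≤ d y := by
    intro y hy
    have hy0 : 0 < y := lt_of_lt_of_le hx₀ hy
    have hle : x₀ * (a * x₀ ^ c + b) ≤ y * (a * y ^ c + b) := by
      gcongr
    have : b * c / (y * (a * y ^ c + b)) ≤ K := by
      rw [hK]
      exact div_le_div_of_nonneg_left (by positivity) (hden x₀ hx₀) hle
    simpa [hd] using sub_nonneg.mpr this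
  have hanti : ∀ y : ℝ, 0 < y → y ≤ x₀ → d y ≤ 0 := by
    intro y hy0 hy
    have hle : y * (a * y ^ c + b) ≤ x₀ * (a * x₀ ^ c + b) := by
      gcongr
    have : K ≤ b * c / (y * (a * y ^ c + b)) := by
      rw [hK]
      exact div_le_div_of_nonneg_left (by positivity) (hden y hy0) hle
    simpa [hd] using sub_nonpos.mpr this
  have key : F x₀ ≤ F x := by
    rcases le_total x₀ x with h | h
    · have : MonotoneOn F (Set.Ici x₀) := by
        apply monotoneOn_of_deriv_nonneg (convex_Ici x₀)
        · exact fun y hy => ((hF y (lt_of_lt_of_le hx₀ hy)).continuousAt).continuousWithinAt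
        · intro y hy
          rw [interior_Ici] at hy
          exact ((hF y (lt_trans hx₀ hy)).differentiableAt).differentiableWithinAt
        · intro y hy
          rw [interior_Ici] at hy
          rw [(hF y (lt_trans hx₀ hy)).deriv]
          exact hmono y (le_of_lt hy)
      exact this (Set.self_mem_Ici) h h
    · have : AntitoneOn F (Set.Icc x x₀) := by
        apply antitoneOn_of_deriv_nonpos (convex_Icc x x₀)
        · exact fun y hy => ((hF y (lt_of_lt_of_le hx hy.1)).continuousAt).continuousWithinAt
        · intro y hy
          rw [interior_Icc] at hy
          exact ((hF y (lt_trans hx hy.1)).differentiableAt).differentiableWithinAt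
        · intro y hy
          rw [interior_Icc] at hy
          rw [(hF y (lt_trans hx hy.1)).deriv]
          exact hanti y (lt_trans hx hy.1) hy.2.le
      exact this ⟨le_refl x, h⟩ ⟨h, le_refl x₀⟩ h
  have hx₀F : F x₀ = Real.log (a + b * x₀ ^ (-c)) := by simp [hFdef]
  have hxF : F x = Real.log (a + b * x ^ (-c)) + K * (x - x₀) := rfl
  rw [hx₀F, hxF] at key
  linarith
end
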